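/- Let X be a continuum irreducible between a and b, and let A = {x ∈ X : X is irreducible between x and b}. Then A is connected. -/

import Mathlib

open Set Topology

/-- The meager composant of `x`: the union of all nowhere dense subcontinua containing `x`. -/
def MeagerComposant (X : Type) [TopologicalSpace X] (x : X) : Set X :=
  ⋃₀ {L : Set X | IsCompact L ∧ IsConnected L ∧ IsNowhereDense L ∧ x ∈ L}

/-- A continuum is hereditarily unicoherent if the intersection of any two subcontinua
is connected (possibly empty, hence preconnected). -/
def HereditarilyUnicoherent (X : Type) [TopologicalSpace X] : Prop :=
  ∀ A B : Set X, IsCompact A → IsConnected A → IsCompact B → IsConnected B →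
    IsPreconnected (A ∩ B)

/-- A subcontinuum `A` of `X` is ample if every open neighborhood of `A` contains a
subcontinuum having `A` in its interior. -/
def Ample {X : Type} [TopologicalSpace X] (A : Set X) : Prop :=
  ∀ U : Set X, IsOpen U → A ⊆ U →
    ∃ K : Set X, IsCompact K ∧ IsPreconnected K ∧ A ⊆ interior K ∧ K ⊆ U

/-- A set `C` is indecomposable if it is not the union of two proper subcontinua. -/
def IndecomposableSet {X : Type} [TopologicalSpace X] (C : Set X) : Prop :=
  ¬ ∃ H K : Set X, IsCompact H ∧ IsConnected H ∧ IsCompact K ∧ IsConnected K ∧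
    H ⊆ C ∧ K ⊆ C ∧ H ≠ C ∧ K ≠ C ∧ H ∪ K = C

/-!
Suppose `A = {x | X is irreducible between x and b}` is split by disjoint open sets `U ∋ p` and
`V ∋ q` (they exist because the two halves of `A` are separated and `X` is completely normal).
By boundary bumping, the component `C` of `p` in `E = closure U` reaches the frontier of `E` at a
point `z`, which lies in neither `U` nor `V`, hence not in `A`: some proper subcontinuum `K`
contains `z` and `b`. Then `K ∪ C` is a subcontinuum containing `p` and `b`, so it is all of `X`;
as `q ∉ C`, `K` contains `q` and `b`, contradicting `q ∈ A`.
-/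

section

variable {X : Type*} [TopologicalSpace X]

def IrreducibleBetween (x y : X) : Prop :=
  ∀ K : Set X, IsCompact K → IsConnected K → x ∈ K → y ∈ K → K = univ

theorem IsClosed.connectedComponentIn {F : Set X} (hF : IsClosed F) (x : X) :
    IsClosed (connectedComponentIn F x) := by
  by_cases hx : x ∈ F
  · rw [connectedComponentIn_eq_image hx]
    exact hF.isClosedEmbedding_subtypeVal.isClosedMap _ isClosed_connectedComponent
  · rw [connectedComponentIn_eq_empty hx]
    exact isClosed_empty

theorem exists_isClopen_disjoint_of_disjoint_connectedComponent [T2Space X] [CompactSpace X]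
    {F : Set X} (hF : IsClosed F) {x : X} (h : Disjoint (connectedComponent x) F) :
    ∃ Z : Set X, IsClopen Z ∧ x ∈ Z ∧ Disjoint Z F := by
  rw [connectedComponent_eq_iInter_isClopen, disjoint_iff_inter_eq_empty, inter_comm] at h
  obtain ⟨t, ht⟩ := hF.isCompact.elim_finite_subfamily_closed _ (fun s => s.2.1.1) h
  refine ⟨⋂ s ∈ t, s, isClopen_biInter_finset fun s _ => s.2.1,
    mem_iInter₂.2 fun s _ => s.2.2, ?_⟩
  rwa [disjoint_iff_inter_eq_empty, inter_comm]

theorem IsClopen.image_val_of_disjoint_frontier {E : Set X} (hE : IsClosed E) {Z : Set E}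
    (hZ : IsClopen Z) (hZE : Disjoint Z (Subtype.val ⁻¹' frontier E)) :
    IsClopen (Subtype.val '' Z) := by
  refine ⟨hE.isClosedEmbedding_subtypeVal.isClosedMap _ hZ.isClosed, ?_⟩
  obtain ⟨O, hO, rfl⟩ := isOpen_induced_iff.mp hZ.isOpen
  have hint : Subtype.val '' (Subtype.val ⁻¹' O : Set E) = interior E ∩ O := by
    rw [Subtype.image_preimage_coe]
    refine Subset.antisymm (fun x ⟨hxE, hxO⟩ => ⟨?_, hxO⟩)
      (inter_subset_inter_left O interior_subset)
    by_contra hxi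
    have hx_fr : x ∈ frontier E := hE.frontier_eq ▸ ⟨hxE, hxi⟩
    exact hZE.ne_of_mem (a := ⟨x, hxE⟩) (b := ⟨x, hxE⟩) hxO hx_fr rfl
  rw [hint]
  exact isOpen_interior.inter hO

theorem exists_mem_connectedComponentIn_inter_frontier [T2Space X] [CompactSpace X]
    [ConnectedSpace X] {E : Set X} (hE : IsClosed E) (hE_ne : E ≠ univ) {p : X} (hp : p ∈ E) :
    (connectedComponentIn E p ∩ frontier E).Nonempty := by
  by_contra h
  rw [not_nonempty_iff_eq_empty, ← disjoint_iff_inter_eq_empty, connectedComponentIn_eq_image hp,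
    disjoint_image_left] at h
  have : CompactSpace E := isCompact_iff_compactSpace.mp hE.isCompact
  obtain ⟨Z, hZ, hpZ, hZE⟩ := exists_isClopen_disjoint_of_disjoint_connectedComponent
    (isClosed_frontier.preimage continuous_subtype_val) h
  have hZ_univ := (hZ.image_val_of_disjoint_frontier hE hZE).eq_univ ⟨p, ⟨p, hp⟩, hpZ, rfl⟩
  exact hE_ne (univ_subset_iff.mp (hZ_univ ▸ Subtype.coe_image_subset E Z))

end

section

variable {X : Type*} [TopologicalSpace X] [CompactSpace X] [ConnectedSpace X]

theorem IrreducibleBetween.exists_mem_frontier [T2Space X] {b p q : X} (hp : IrreducibleBetween p b)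
    (hq : IrreducibleBetween q b) {E : Set X} (hE : IsClosed E) (hpE : p ∈ E) (hqE : q ∉ E) :
    ∃ z ∈ frontier E, IrreducibleBetween z b := by
  obtain ⟨z, hzC, hzE⟩ :=
    exists_mem_connectedComponentIn_inter_frontier hE (fun h => hqE (h ▸ mem_univ q)) hpE
  refine ⟨z, hzE, fun K hK hK_conn hzK hbK => ?_⟩
  have hC_conn : IsConnected (connectedComponentIn E p) :=
    isConnected_connectedComponentIn_iff.mpr hpE
  have hKC : K ∪ connectedComponentIn E p = univ :=
    hp _ (hK.union (hE.connectedComponentIn p).isCompact) (hK_conn.union ⟨z, hzK, hzC⟩ hC_conn)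
      (Or.inr (mem_connectedComponentIn hpE)) (Or.inl hbK)
  have hqK : q ∈ K := (hKC ▸ mem_univ q : q ∈ K ∪ _).resolve_right
    fun hqC => hqE (connectedComponentIn_subset E p hqC)
  exact hq K hK hK_conn hqK hbK

theorem isPreconnected_setOf_irreducibleBetween [T5Space X] (b : X) :
    IsPreconnected {x : X | IrreducibleBetween x b} := by
  set A := {x : X | IrreducibleBetween x b}
  rintro u v hu hv hA ⟨p, hpA, hpu⟩ ⟨q, hqA, hqv⟩
  by_contra! h
  have huv : Disjoint (A ∩ u) v := disjoint_iff_inter_eq_empty.mpr (by rwa [inter_assoc])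
  have hvu : Disjoint (A ∩ v) u :=
    disjoint_iff_inter_eq_empty.mpr (by rwa [inter_assoc, inter_comm v])
  obtain ⟨U, V, hU, hV, hAU, hAV, hUV⟩ := separatedNhds_iff_disjoint.mpr <| completely_normal
    ((huv.closure_left hv).mono_right inter_subset_right)
    ((hvu.symm.closure_right hu).mono_left inter_subset_right)
  have hUV_closure : Disjoint (closure U) V := hUV.closure_left hV
  obtain ⟨z, hz, hzA⟩ := hpA.exists_mem_frontier hqA isClosed_closure
    (subset_closure (hAU ⟨hpA, hpu⟩)) fun hq => hUV_closure.ne_of_mem hq (hAV ⟨hqA, hqv⟩) rfl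
  have hzU : z ∉ U := fun hzU => (hU.frontier_eq ▸ frontier_closure_subset hz).2 hzU
  have hzV : z ∉ V := fun hzV =>
    hUV_closure.ne_of_mem (closure_closure (s := U) ▸ frontier_subset_closure hz) hzV rfl
  rcases hA hzA with hzu | hzv
  exacts [hzU (hAU ⟨hzA, hzu⟩), hzV (hAV ⟨hzA, hzv⟩)]

end

theorem irreducibleSet_isConnected_general (X : Type) [MetricSpace X] [CompactSpace X] [ConnectedSpace X] (a b : X)
    (hirr : ∀ K : Set X, IsCompact K → IsConnected K → a ∈ K → b ∈ K → K = Set.univ) :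
    IsConnected {x : X | ∀ K : Set X, IsCompact K → IsConnected K → x ∈ K → b ∈ K →
      K = Set.univ} :=
  ⟨⟨a, hirr⟩, isPreconnected_setOf_irreducibleBetween b⟩

/-- If `X` is a continuum irreducible between `a` and `b`, then the set
`A = {x | X is irreducible between x and b}` is connected. -/
theorem irreducibleSet_isConnected (X : Type) [MetricSpace X] [CompactSpace X] [ConnectedSpace X] [Nonempty X] (a b : X)
    (hirr : ∀ K : Set X, IsCompact K → IsConnected K → a ∈ K → b ∈ K → K = Set.univ) :
    IsConnected {x : X | ∀ K : Set X, IsCompact K → IsConnected K → x ∈ K → b ∈ K →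
      K = Set.univ} :=
  irreducibleSet_isConnected_general X a b hirr
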